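/- Let v_2 be an additive valuation over a finite set M of goods and write μ_2 = μ_2(3, M). Suppose that v_{2j} < (7/8)μ_2 for every single good j ∈ M, and that (A_1, A_2, A_3) is a partition of M with v_2(A_2) < (7/8)μ_2 and v_2(A_3) < (7/8)μ_2. Then max{ μ_2(2, A_1 ∪ A_2), μ_2(2, A_1 ∪ A_3) } ≥ (7/8)μ_2, i.e., at least one of the two sets A_1 ∪ A_2 and A_1 ∪ A_3 admits a partition into two bundles each of v_2-value at least (7/8)μ_2. -/

import Mathlib

/-- `P` is a partition of the finite set `S` of goods into `n`
(possibly empty) pairwise disjoint bundles. -/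
def IsPartition {ι : Type*} [DecidableEq ι] (n : ℕ) (S : Finset ι)
    (P : Fin n → Finset ι) : Prop :=
  (∀ i j : Fin n, i ≠ j → Disjoint (P i) (P j)) ∧ Finset.univ.biUnion P = S

/-- The `n`-maximin share of an agent with additive valuation given by item
values `v` with respect to the finite set `S` of goods:
`μ(n, S) = max over partitions of S into n bundles of the minimum bundle value`. -/
noncomputable def mms {ι : Type*} [DecidableEq ι] (n : ℕ) (S : Finset ι)
    (v : ι → ℝ) : ℝ :=
  sSup {x : ℝ | ∃ P : Fin n → Finset ι,
    IsPartition n S P ∧ x = ⨅ j : Fin n, (P j).sum v}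



/-!
Fix a partition `B` of `M` into three bundles each worth at least `μ = μ₂(3, M)`, and let
`l i = v(B i ∩ A 2)` and `m i = v(B i ∩ A 1)`. By symmetry the least of these six numbers is
some `l a`. Split `M \ A 2 = A 0 ∪ A 1` into the bundle `(B a \ A 2) ∪ T` and its complement,
where `T = ∅` if `l a ≤ μ/8` and otherwise `T = B b ∩ A 1` for the `b ≠ a` with the smaller
`m b`. Then `l a - μ/8 ≤ v(T)`, and in the second case `v(T) < 3μ/8` because `m a > μ/8` and
`v(A 1) < 7μ/8`. So the bundle is worth at least `μ - l a + v(T) ≥ 7μ/8`, and its complement,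
as `v(M \ B a) ≥ 2μ`, at least `2μ - v(A 2) + l a - v(T) ≥ 7μ/8`.
-/

open Finset

namespace IsPartition

variable {ι : Type*} [DecidableEq ι] {n : ℕ} {S : Finset ι} {P : Fin n → Finset ι}

theorem subset (hP : IsPartition n S P) (i : Fin n) : P i ⊆ S :=
  hP.2 ▸ subset_biUnion_of_mem P (mem_univ i)

theorem inter (hP : IsPartition n S P) {X : Finset ι} (hX : X ⊆ S) :
    IsPartition n X (fun i => P i ∩ X) :=
  ⟨fun i j hij => (hP.1 i j hij).mono inter_subset_left inter_subset_left, by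
    rw [← biUnion_inter, hP.2, inter_eq_right.2 hX]⟩

theorem sum_eq (hP : IsPartition n S P) (v : ι → ℝ) : ∑ i, (P i).sum v = S.sum v := by
  rw [← hP.2, sum_biUnion fun i _ j _ hij => hP.1 i j hij]

theorem sdiff_eq_biUnion_erase (hP : IsPartition n S P) (k : Fin n) :
    S \ P k = (univ.erase k).biUnion P := by
  ext x
  simp only [mem_sdiff, mem_biUnion, mem_erase, mem_univ, and_true]
  constructor
  · rintro ⟨hxS, hxk⟩
    obtain ⟨i, -, hxi⟩ := mem_biUnion.1 (hP.2 ▸ hxS)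
    exact ⟨i, fun hik => hxk (hik ▸ hxi), hxi⟩
  · rintro ⟨i, hik, hxi⟩
    exact ⟨hP.subset i hxi, disjoint_left.1 (hP.1 i k hik) hxi⟩

end IsPartition

section MaximinShare

variable {ι : Type*} [DecidableEq ι]

theorem isPartition_two_sdiff {S P : Finset ι} (hP : P ⊆ S) : IsPartition 2 S ![P, S \ P] := by
  refine ⟨fun i j hij => ?_, ?_⟩
  · fin_cases i <;> fin_cases j <;> simp_all [disjoint_sdiff, sdiff_disjoint]
  · simp [Fin.univ_succ, union_sdiff_of_subset hP]

theorem exists_isPartition (n : ℕ) [NeZero n] (S : Finset ι) :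
    ∃ P : Fin n → Finset ι, IsPartition n S P := by
  refine ⟨fun i => if i = 0 then S else ∅, fun i j hij => ?_, ?_⟩
  · by_cases hi : i = 0
    · simp [hi, Ne.symm (hi ▸ hij)]
    · simp [hi]
  · ext x
    simp only [mem_biUnion, mem_univ, true_and]
    refine ⟨fun ⟨i, hi⟩ => ?_, fun hx => ⟨0, by simpa using hx⟩⟩
    split_ifs at hi
    exacts [hi, absurd hi (notMem_empty x)]

def mmsValues (n : ℕ) (S : Finset ι) (v : ι → ℝ) : Set ℝ :=
  {x : ℝ | ∃ P : Fin n → Finset ι, IsPartition n S P ∧ x = ⨅ j : Fin n, (P j).sum v}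

theorem mms_eq_sSup_mmsValues (n : ℕ) (S : Finset ι) (v : ι → ℝ) :
    mms n S v = sSup (mmsValues n S v) :=
  rfl

theorem finite_mmsValues (n : ℕ) (S : Finset ι) (v : ι → ℝ) : (mmsValues n S v).Finite := by
  have hparts : {P : Fin n → Finset ι | IsPartition n S P}.Finite :=
    (Set.Finite.pi fun _ => S.powerset.finite_toSet).subset fun P hP =>
      Set.mem_univ_pi.2 fun i => mem_powerset.2 (IsPartition.subset hP i)
  refine (hparts.image fun P => ⨅ j : Fin n, (P j).sum v).subset ?_
  rintro x ⟨P, hP, rfl⟩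
  exact ⟨P, hP, rfl⟩

theorem le_mms {n : ℕ} [NeZero n] {S : Finset ι} {v : ι → ℝ} {P : Fin n → Finset ι}
    (hP : IsPartition n S P) {c : ℝ} (hc : ∀ i, c ≤ (P i).sum v) : c ≤ mms n S v :=
  (le_ciInf hc).trans <| le_csSup (finite_mmsValues n S v).bddAbove ⟨P, hP, rfl⟩

theorem le_mms_two {S P : Finset ι} {v : ι → ℝ} (hP : P ⊆ S) {c : ℝ}
    (hc : c ≤ P.sum v) (hc' : c ≤ (S \ P).sum v) : c ≤ mms 2 S v :=
  le_mms (isPartition_two_sdiff hP) fun i => by fin_cases i <;> simpa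

theorem exists_isPartition_mms_le_sum (n : ℕ) [NeZero n] (S : Finset ι) (v : ι → ℝ) :
    ∃ P : Fin n → Finset ι, IsPartition n S P ∧ ∀ i, mms n S v ≤ (P i).sum v := by
  obtain ⟨P₀, hP₀⟩ := exists_isPartition n S
  have hne : (mmsValues n S v).Nonempty := ⟨_, P₀, hP₀, rfl⟩
  obtain ⟨P, hP, hμ⟩ := hne.csSup_mem (finite_mmsValues n S v)
  refine ⟨P, hP, fun i => ?_⟩
  rw [mms_eq_sSup_mmsValues, hμ]
  exact ciInf_le (Set.finite_range _).bddBelow i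

end MaximinShare

theorem two_mul_le_sum_sub {f : Fin 3 → ℝ} {c : ℝ} (a : Fin 3) (h : ∀ i ∈ univ.erase a, c ≤ f i) :
    2 * c ≤ ∑ i, f i - f a := by
  have := card_nsmul_le_sum _ _ _ h
  rw [card_erase_of_mem (mem_univ a), card_univ, Fintype.card_fin, sum_erase_eq_sub (mem_univ a)]
    at this
  simpa using this

section SevenEighths

variable {ι : Type*} [DecidableEq ι] {M X : Finset ι} {v : ι → ℝ} {μ : ℝ}

theorem le_mms_two_sdiff_of_exchange {B T : Finset ι} (hBM : B ⊆ M) (hX : X ⊆ M)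
    (hT : T ⊆ M \ X) (hTB : Disjoint T B) (hμB : μ ≤ B.sum v)
    (hrest : 2 * μ ≤ M.sum v - B.sum v)
    (hlow : (B ∩ X).sum v ≤ μ / 8 + T.sum v)
    (hhigh : T.sum v + X.sum v ≤ 9 / 8 * μ + (B ∩ X).sum v) :
    7 / 8 * μ ≤ mms 2 (M \ X) v := by
  have hBX : (B \ X).sum v = B.sum v - (B ∩ X).sum v := by
    rw [← sdiff_inter_self_left B X, sum_sdiff_eq_sub inter_subset_left]
  have hsum : ((B \ X) ∪ T).sum v = B.sum v - (B ∩ X).sum v + T.sum v := by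
    rw [sum_union (hTB.symm.mono_left sdiff_subset), hBX]
  have hsub : (B \ X) ∪ T ⊆ M \ X := union_subset (sdiff_subset_sdiff hBM le_rfl) hT
  refine le_mms_two hsub ?_ ?_
  · linarith
  · rw [sum_sdiff_eq_sub hsub, sum_sdiff_eq_sub hX, hsum]
    linarith

theorem seven_eighths_le_mms_two_sdiff {Y : Finset ι} {B : Fin 3 → Finset ι}
    (hB : IsPartition 3 M B) (hμB : ∀ i, μ ≤ (B i).sum v) (hv : ∀ j ∈ M, 0 ≤ v j)
    (hX : X ⊆ M) (hY : Y ⊆ M) (hXY : Disjoint X Y)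
    (hXμ : X.sum v < 7 / 8 * μ) (hYμ : Y.sum v < 7 / 8 * μ) (a : Fin 3)
    (ha : ∀ i, (B a ∩ X).sum v ≤ (B i ∩ Y).sum v) :
    7 / 8 * μ ≤ mms 2 (M \ X) v := by
  have hrest : 2 * μ ≤ M.sum v - (B a).sum v := by
    rw [← hB.sum_eq]
    exact two_mul_le_sum_sub a fun i _ => hμB i
  have hX₀ : 0 ≤ X.sum v := sum_nonneg fun j hj => hv j (hX hj)
  have hXa : 0 ≤ (B a ∩ X).sum v := sum_nonneg fun j hj => hv j (hX (mem_inter.1 hj).2)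
  rcases le_or_gt ((B a ∩ X).sum v) (μ / 8) with hsmall | hlarge
  · exact le_mms_two_sdiff_of_exchange (T := ∅) (hB.subset a) hX (empty_subset _)
      (disjoint_empty_left _) (hμB a) hrest (by simpa using hsmall) (by rw [sum_empty]; linarith)
  obtain ⟨b, hb, hbmin⟩ := (univ.erase a).exists_min_image (fun i => (B i ∩ Y).sum v)
    ⟨a + 1, by simp⟩
  have hYb : 2 * (B b ∩ Y).sum v ≤ Y.sum v - (B a ∩ Y).sum v := by
    rw [← (hB.inter hY).sum_eq]
    exact two_mul_le_sum_sub a hbmin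
  have hba : b ≠ a := ne_of_mem_erase hb
  refine le_mms_two_sdiff_of_exchange (hB.subset a) hX
    (inter_subset_right.trans (subset_sdiff.2 ⟨hY, hXY.symm⟩))
    ((hB.1 b a hba).mono_left inter_subset_left) (hμB a) hrest ?_ ?_
  · linarith [ha b]
  · linarith [ha a]

end SevenEighths

theorem mms_two_of_union_ge_general {ι : Type*} [DecidableEq ι]
    (M : Finset ι) (v : ι → ℝ) (hv : ∀ j ∈ M, 0 ≤ v j)
    (A : Fin 3 → Finset ι) (hA : IsPartition 3 M A)
    (hA2 : (A 1).sum v < 7 / 8 * mms 3 M v)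
    (hA3 : (A 2).sum v < 7 / 8 * mms 3 M v) :
    7 / 8 * mms 3 M v ≤ max (mms 2 (A 0 ∪ A 1) v) (mms 2 (A 0 ∪ A 2) v) := by
  obtain ⟨B, hB, hμB⟩ := exists_isPartition_mms_le_sum 3 M v
  have h01 : A 0 ∪ A 1 = M \ A 2 := by
    rw [hA.sdiff_eq_biUnion_erase, show univ.erase (2 : Fin 3) = {0, 1} by decide]
    simp
  have h02 : A 0 ∪ A 2 = M \ A 1 := by
    rw [hA.sdiff_eq_biUnion_erase, show univ.erase (1 : Fin 3) = {0, 2} by decide]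
    simp
  obtain ⟨a, ha⟩ := Finite.exists_min fun i => (B i ∩ A 2).sum v
  obtain ⟨b, hb⟩ := Finite.exists_min fun i => (B i ∩ A 1).sum v
  rcases le_total ((B a ∩ A 2).sum v) ((B b ∩ A 1).sum v) with hab | hba
  · exact le_max_of_le_left (h01 ▸ seven_eighths_le_mms_two_sdiff hB hμB hv (hA.subset 2)
      (hA.subset 1) (hA.1 2 1 (by decide)) hA3 hA2 a fun i => hab.trans (hb i))
  · exact le_max_of_le_right (h02 ▸ seven_eighths_le_mms_two_sdiff hB hμB hv (hA.subset 1)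
      (hA.subset 2) (hA.1 1 2 (by decide)) hA2 hA3 b fun i => hba.trans (ha i))

/-- if every single good has `v₂`-value less than `(7/8)μ₂`, where
`μ₂ = μ₂(3, M)`, and `(A 0, A 1, A 2)` is a partition of `M` whose last two bundles
each have value less than `(7/8)μ₂`, then at least one of `A 0 ∪ A 1` and `A 0 ∪ A 2`
admits a partition into two bundles each of value at least `(7/8)μ₂`. -/
theorem mms_two_of_union_ge {ι : Type*} [DecidableEq ι]
    (M : Finset ι) (v : ι → ℝ) (hv : ∀ j ∈ M, 0 ≤ v j)
    (hitems : ∀ j ∈ M, v j < 7 / 8 * mms 3 M v)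
    (A : Fin 3 → Finset ι) (hA : IsPartition 3 M A)
    (hA2 : (A 1).sum v < 7 / 8 * mms 3 M v)
    (hA3 : (A 2).sum v < 7 / 8 * mms 3 M v) :
    7 / 8 * mms 3 M v ≤ max (mms 2 (A 0 ∪ A 1) v) (mms 2 (A 0 ∪ A 2) v) :=
  mms_two_of_union_ge_general M v hv A hA hA2 hA3
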